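/- arXiv:2008.03363 — 2 statements merged into one kernel-verified Lean document; each statement's English description precedes it below -/
import Mathlib

section
/- In Milnor–Witt K-theory of a field k, for every unit a ∈ k^× and every natural number n, the symbol [a^n] equals n_ε · [a] in K^{MW}_1(k), where n_ε = Σ_{i=1}^n ⟨(-1)^{i-1}⟩ ∈ K^{MW}_0(k). -/
/-- The free `ℤ`-algebra on the generators of Milnor–Witt K-theory of `k`:
a symbol generator for each unit of `k` (left summand) and `η` (right summand). -/
abbrev MWPre (k : Type*) [Field k] := FreeAlgebra ℤ (kˣ ⊕ Unit)

/-- The generator `[a]` before imposing relations. -/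
def MWPre.gen {k : Type*} [Field k] (a : kˣ) : MWPre k :=
  FreeAlgebra.ι ℤ (Sum.inl a)

/-- The generator `η` before imposing relations. -/
def MWPre.eta (k : Type*) [Field k] : MWPre k :=
  FreeAlgebra.ι ℤ (Sum.inr ())

/-- The defining relations of Milnor–Witt K-theory: the Steinberg relation
`[a][1-a] = 0`, the twisted logarithm relation `[ab] = [a] + [b] + η[a][b]`,
commutation of `η` with symbols, and `η(η[-1] + 2) = 0`. -/
inductive MWRel (k : Type*) [Field k] : MWPre k → MWPre k → Prop
  | steinberg (a : kˣ) (h : (a : k) ≠ 1) :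
      MWRel k (MWPre.gen a * MWPre.gen (Units.mk0 (1 - (a : k)) (sub_ne_zero.mpr (Ne.symm h)))) 0
  | mul_add (a b : kˣ) :
      MWRel k (MWPre.gen (a * b))
        (MWPre.gen a + MWPre.gen b + MWPre.eta k * MWPre.gen a * MWPre.gen b)
  | eta_comm (a : kˣ) : MWRel k (MWPre.gen a * MWPre.eta k) (MWPre.eta k * MWPre.gen a)
  | eta_rel : MWRel k (MWPre.eta k * (MWPre.eta k * MWPre.gen (-1 : kˣ) + 2)) 0

/-- The (ungraded) Milnor–Witt K-theory ring of `k`. -/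
abbrev MW (k : Type*) [Field k] := RingQuot (MWRel k)

/-- The symbol `[a] ∈ K^{MW}_1(k)`. -/
def MW.sym {k : Type*} [Field k] (a : kˣ) : MW k :=
  RingQuot.mkRingHom (MWRel k) (MWPre.gen a)

/-- The element `η ∈ K^{MW}_{-1}(k)`. -/
def MW.eta (k : Type*) [Field k] : MW k :=
  RingQuot.mkRingHom (MWRel k) (MWPre.eta k)

/-- The form `⟨a⟩ = 1 + η[a] ∈ K^{MW}_0(k)`. -/
def MW.form {k : Type*} [Field k] (a : kˣ) : MW k := 1 + MW.eta k * MW.sym a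

/-- The element `n_ε = Σ_{i=1}^n ⟨(-1)^{i-1}⟩ ∈ K^{MW}_0(k)`. -/
def MW.nE (k : Type*) [Field k] (n : ℕ) : MW k :=
  ∑ i ∈ Finset.range n, MW.form ((-1 : kˣ) ^ i)

namespace MW
variable {k : Type*} [Field k]

lemma hz {R : Type*} [Ring R] {x y : R} (h : x * y = 0) (c : R) : c * x * y = 0 := by
  rw [mul_assoc, h, mul_zero]

lemma rel {x y : MWPre k} (h : MWRel k x y) :
    RingQuot.mkRingHom (MWRel k) x = RingQuot.mkRingHom (MWRel k) y :=
  RingQuot.mkRingHom_rel h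

lemma sym_mul (a b : kˣ) :
    sym (a * b) = sym a + sym b + eta k * sym a * sym b := by
  have h := rel (MWRel.mul_add a b)
  simpa [MW.sym, MW.eta, map_add, map_mul] using h

lemma eta_comm (a : kˣ) : sym a * eta k = eta k * sym a := by
  have h := rel (MWRel.eta_comm a)
  simpa [MW.sym, MW.eta, map_mul] using h

lemma eta_rel : eta k * (eta k * sym (-1 : kˣ) + 2) = 0 := by
  have h := rel (MWRel.eta_rel (k := k))
  simpa [MW.sym, MW.eta, map_mul, map_add, map_ofNat] using h

lemma steinberg' (a b : kˣ) (h : (a : k) ≠ 1) (hb : (b : k) = 1 - (a : k)) :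
    sym a * sym b = 0 := by
  have hb' : b = Units.mk0 (1 - (a : k)) (sub_ne_zero.mpr (Ne.symm h)) :=
    Units.ext (by simpa using hb)
  have h2 := rel (MWRel.steinberg a h)
  rw [hb']
  simpa [MW.sym, map_mul] using h2

end MW
namespace MW
variable {k : Type*} [Field k]

lemma eta2e : eta k * eta k * sym (-1 : kˣ) = -(eta k * 2) := by
  have h := eta_rel (k := k)
  rw [mul_add, ← mul_assoc] at h
  exact eq_neg_of_add_eq_zero_left h

lemma symm_comm (a b : kˣ) :
    eta k * sym a * sym b = eta k * sym b * sym a := by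
  have h : sym (a * b) = sym (b * a) := by rw [mul_comm]
  rw [sym_mul, sym_mul, add_comm (sym a) (sym b)] at h
  exact add_left_cancel h

lemma eta_sym_one : eta k * sym (1 : kˣ) = 0 := by
  have h : sym (1 : kˣ) = sym (-1 : kˣ) + sym (-1 : kˣ)
      + eta k * sym (-1 : kˣ) * sym (-1 : kˣ) := by
    simpa using sym_mul (-1 : kˣ) (-1)
  have h2 : eta k * (eta k * sym (-1 : kˣ) * sym (-1 : kˣ))
      = -(eta k * sym (-1 : kˣ)) - eta k * sym (-1 : kˣ) := by
    rw [← mul_assoc, ← mul_assoc, eta2e]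
    noncomm_ring
    rw [smul_mul_assoc]
  rw [h, mul_add, mul_add, h2]
  abel

lemma sym_one : sym (1 : kˣ) = 0 := by
  have h := sym_mul (1 : kˣ) 1
  rw [mul_one, eta_sym_one, zero_mul, add_zero] at h
  exact left_eq_add.mp h

end MW
namespace MW
variable {k : Type*} [Field k]

lemma sym_add_expand (a : kˣ) :
    sym a + sym a⁻¹ + eta k * sym a * sym a⁻¹ = 0 := by
  have h := sym_mul a a⁻¹
  rw [mul_inv_cancel, sym_one] at h
  exact h.symm

lemma steinberg_inv (a u : kˣ) (h : (a : k) ≠ 1) (hu : (u : k) = 1 - (a : k)⁻¹) :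
    sym a * sym u = 0 := by
  have ha : ((a⁻¹ : kˣ) : k) ≠ 1 := by
    rw [Units.val_inv_eq_inv_val]
    intro hc
    apply h
    have := congrArg (fun x => x⁻¹) hc
    simpa using this
  have h1 : sym a⁻¹ * sym u = 0 :=
    steinberg' a⁻¹ u ha (by rw [hu, Units.val_inv_eq_inv_val])
  have h2 := congrArg (· * sym u) (sym_add_expand a)
  simp only [add_mul, zero_mul] at h2
  rw [mul_assoc (eta k * sym a), h1, mul_zero, add_zero, add_zero] at h2
  exact h2

lemma sym_mul_sym_neg (a : kˣ) : sym a * sym (-a) = 0 := by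
  by_cases h : (a : k) = 1
  · have : a = 1 := Units.ext (by simpa using h)
    rw [this, sym_one, zero_mul]
  · have hne : (1 : k) - (a : k)⁻¹ ≠ 0 := by
      intro hc
      apply h
      have h5 : (a : k)⁻¹ = 1 := (sub_eq_zero.mp hc).symm
      have := congrArg (fun x => x⁻¹) h5
      simpa using this
    set u : kˣ := Units.mk0 (1 - (a : k)⁻¹) hne with hu
    have hmu : sym a * sym u = 0 :=
      steinberg_inv a u h (by rw [hu]; simp)
    have hc : -a * u = Units.mk0 (1 - (a : k)) (sub_ne_zero.mpr (Ne.symm h)) := by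
      apply Units.ext
      simp only [Units.val_mul, Units.val_neg, hu, Units.val_mk0]
      field_simp
      ring
    have hst : sym a * sym (-a * u) = 0 :=
      steinberg' a _ h (by rw [hc]; simp)
    have hexp := sym_mul (-a) u
    have h3 : sym a * (eta k * sym (-a) * sym u) = 0 := by
      rw [← mul_assoc, ← mul_assoc, eta_comm, symm_comm a (-a), mul_assoc, hmu,
        mul_zero]
    have h4 : sym a * sym (-a) = sym a * sym (-a * u) := by
      rw [hexp, mul_add, mul_add, hmu, h3, add_zero, add_zero]
    exact h4.trans hst

end MW
namespace MW
variable {k : Type*} [Field k]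

lemma eta_sym_sq (a : kˣ) :
    eta k * sym a * sym a = eta k * sym (-1 : kˣ) * sym a := by
  have hexp : sym (-a) = sym (-1 : kˣ) + sym a
      + eta k * sym (-1 : kˣ) * sym a := by
    simpa [neg_one_mul] using sym_mul (-1 : kˣ) a
  have hT : sym a * (eta k * sym (-1 : kˣ) * sym a)
      = eta k * sym (-1 : kˣ) * sym a * sym a := by
    rw [← mul_assoc, ← mul_assoc, eta_comm, symm_comm a (-1)]
  have hA : sym a * sym (-1 : kˣ) + sym a * sym a
      + eta k * sym (-1 : kˣ) * sym a * sym a = 0 := by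
    calc sym a * sym (-1 : kˣ) + sym a * sym a
          + eta k * sym (-1 : kˣ) * sym a * sym a
        = sym a * sym (-a) := by rw [hexp, mul_add, mul_add, hT]
      _ = 0 := sym_mul_sym_neg a
  have hA2 := congrArg (eta k * ·) hA
  simp only [mul_add, mul_zero, ← mul_assoc] at hA2
  rw [symm_comm a (-1), eta2e] at hA2
  have h7 : eta k * sym (-1 : kˣ) * sym a - eta k * sym a * sym a = 0 := by
    rw [← hA2]
    noncomm_ring
    simp only [smul_mul_assoc]
    abel
  exact (sub_eq_zero.mp h7).symm

lemma eta_form_even {n : ℕ} (hn : Even n) :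
    eta k * form ((-1 : kˣ) ^ n) = eta k := by
  rw [hn.neg_one_pow, MW.form, mul_add, mul_one, eta_sym_one, mul_zero, add_zero]

lemma eta_form_odd {n : ℕ} (hn : Odd n) :
    eta k * form ((-1 : kˣ) ^ n) = -eta k := by
  rw [hn.neg_one_pow, MW.form, mul_add, mul_one, ← mul_assoc, eta2e]
  noncomm_ring

lemma eta_nE (n : ℕ) : eta k * nE k n = if Even n then 0 else eta k := by
  induction n with
  | zero => simp [MW.nE]
  | succ n ih =>
    rw [MW.nE, Finset.sum_range_succ, ← MW.nE, mul_add, ih]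
    by_cases hn : Even n
    · rw [eta_form_even hn, if_pos hn, zero_add,
        if_neg (by simp [Nat.even_add_one, hn])]
    · rw [eta_form_odd (Nat.not_even_iff_odd.mp hn), if_neg hn,
        if_pos (Nat.even_add_one.mpr hn), add_neg_cancel]

end MW

/-- In Milnor–Witt K-theory of a field `k`, for every unit `a ∈ kˣ` and every
natural number `n`, the symbol `[aⁿ]` equals `n_ε · [a]` in `K^{MW}_1(k)`. -/
theorem MW.sym_pow (k : Type*) [Field k] (a : kˣ) (n : ℕ) :
    MW.sym (a ^ n) = MW.nE k n * MW.sym a := by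

  induction n with
  | zero => rw [pow_zero, MW.sym_one, MW.nE]; simp
  | succ n ih =>
    rw [pow_succ, MW.sym_mul, ih]
    conv_rhs => rw [MW.nE, Finset.sum_range_succ, ← MW.nE, add_mul, MW.form,
      add_mul, one_mul]
    have hkey : MW.eta k * (MW.nE k n * MW.sym a) * MW.sym a
        = MW.eta k * MW.sym ((-1 : kˣ) ^ n) * MW.sym a := by
      rw [← mul_assoc, MW.eta_nE]
      by_cases hn : Even n
      · rw [if_pos hn, zero_mul, zero_mul, hn.neg_one_pow, MW.eta_sym_one,
          zero_mul]
      · rw [if_neg hn, (Nat.not_even_iff_odd.mp hn).neg_one_pow,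
          MW.eta_sym_sq a]
    rw [hkey, add_assoc]
end

section
/- Let R be a commutative ring. Morphisms of schemes Spec R → 𝔸^n ∖ {0} over ℤ are in natural bijection with unimodular rows of length n over R, i.e., n-tuples (a_1,…,a_n) ∈ R^n generating the unit ideal. -/
open AlgebraicGeometry MvPolynomial CategoryTheory

/-- Affine `n`-space over `ℤ`, as the spectrum of `ℤ[x₁,…,xₙ]`. -/
noncomputable abbrev AffineN (n : ℕ) : Scheme :=
  Spec (CommRingCat.of (MvPolynomial (Fin n) ℤ))

/-- `𝔸ⁿ ∖ {0}`: the open subscheme of affine `n`-space over `ℤ` that is the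
complement of the origin, i.e. of the common vanishing locus of `x₁,…,xₙ`. -/
noncomputable abbrev AffineNMinusZero (n : ℕ) : Scheme :=
  Scheme.Opens.toScheme
    (X := AffineN n)
    ⟨(PrimeSpectrum.zeroLocus (Set.range (X : Fin n → MvPolynomial (Fin n) ℤ)))ᶜ,
      (PrimeSpectrum.isClosed_zeroLocus _).isOpen_compl⟩

section Aux

variable {R : Type} [CommRing R] {n : ℕ}

/-- The open set `𝔸ⁿ ∖ {0}` inside affine `n`-space. -/
noncomputable def UZero (n : ℕ) : (AffineN n).Opens :=
  ⟨(PrimeSpectrum.zeroLocus (Set.range (X : Fin n → MvPolynomial (Fin n) ℤ)))ᶜ,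
    (PrimeSpectrum.isClosed_zeroLocus _).isOpen_compl⟩

lemma key_aux (φ : MvPolynomial (Fin n) ℤ →+* R) :
    Set.range (Spec.map (CommRingCat.ofHom φ)).base ⊆ (UZero n : Set (AffineN n)) ↔
      Ideal.span (Set.range fun i => φ (X i)) = ⊤ := by
  have h1 : (Set.range fun i => φ (X i)) =
      φ '' Set.range (X : Fin n → MvPolynomial (Fin n) ℤ) := by
    rw [← Set.range_comp]; rfl
  rw [h1, ← PrimeSpectrum.zeroLocus_empty_iff_eq_top, PrimeSpectrum.zeroLocus_span,
    Set.eq_empty_iff_forall_notMem]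
  constructor
  · intro H p hp
    have := H ⟨p, rfl⟩
    simp only [UZero, Set.mem_compl_iff, SetLike.mem_coe, PrimeSpectrum.mem_zeroLocus] at this
    apply this
    intro x hx
    exact hp (Set.mem_image_of_mem φ hx)
  · rintro H _ ⟨p, rfl⟩
    simp only [UZero, Set.mem_compl_iff, SetLike.mem_coe, PrimeSpectrum.mem_zeroLocus]
    intro hsub
    exact H p ((PrimeSpectrum.mem_zeroLocus _ _).mpr (Set.image_subset_iff.mpr hsub))

lemma eval₂Hom_eq (φ : MvPolynomial (Fin n) ℤ →+* R) :
    eval₂Hom (Int.castRingHom R) (fun i => φ (X i)) = φ := by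
  apply MvPolynomial.ringHom_ext
  · intro z
    simp only [eval₂Hom_C]
    exact RingHom.congr_fun (RingHom.ext_int (Int.castRingHom R) (φ.comp C)) z
  · intro i
    simp

lemma range_subset_aux (a : Fin n → R) (ha : Ideal.span (Set.range a) = ⊤) :
    Set.range (Spec.map (CommRingCat.ofHom (eval₂Hom (Int.castRingHom R) a))).base ⊆
      Set.range (UZero n).ι.base := by
  rw [Scheme.Opens.range_ι, key_aux]
  have h2 : (fun i => (eval₂Hom (Int.castRingHom R) a) (X i)) = a := by
    funext i; simp
  rw [h2]
  exact ha

lemma prop_aux (g : Spec (CommRingCat.of R) ⟶ (UZero n).toScheme) :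
    Ideal.span (Set.range fun i => (Spec.preimage (g ≫ (UZero n).ι)) (X i)) = ⊤ := by
  rw [← key_aux (R := R) (Spec.preimage (g ≫ (UZero n).ι)).hom]
  rw [show CommRingCat.ofHom (Spec.preimage (g ≫ (UZero n).ι)).hom =
    Spec.preimage (g ≫ (UZero n).ι) from rfl, Spec.map_preimage]
  have h3 : Set.range ⇑(g ≫ (UZero n).ι).base ⊆ Set.range ⇑(UZero n).ι.base := by
    rintro _ ⟨x, rfl⟩
    exact ⟨g.base x, rfl⟩
  rwa [Scheme.Opens.range_ι] at h3

/-- The equivalence. -/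
noncomputable def theEquiv (R : Type) [CommRing R] (n : ℕ) :
    (Spec (CommRingCat.of R) ⟶ (UZero n).toScheme) ≃
      {a : Fin n → R // Ideal.span (Set.range a) = ⊤} where
  toFun g := ⟨fun i => (Spec.preimage (g ≫ (UZero n).ι)) (X i), prop_aux g⟩
  invFun a :=
    IsOpenImmersion.lift (UZero n).ι
      (Spec.map (CommRingCat.ofHom (eval₂Hom (Int.castRingHom R) a.1)))
      (range_subset_aux a.1 a.2)
  left_inv g := by
    dsimp only
    symm
    apply IsOpenImmersion.lift_uniq
    rw [eval₂Hom_eq (R := R) (Spec.preimage (g ≫ (UZero n).ι)).hom,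
      CommRingCat.ofHom_hom, Spec.map_preimage]
  right_inv := by
    rintro ⟨a, ha⟩
    ext i
    simp only [IsOpenImmersion.lift_fac, Spec.preimage_map]
    simp

end Aux

/-- For a commutative ring `R`, morphisms of schemes `Spec R → 𝔸ⁿ ∖ {0}` over `ℤ`
are in bijection with unimodular rows of length `n` over `R`, i.e. `n`-tuples
`(a₁,…,aₙ)` generating the unit ideal. -/
theorem hom_to_affine_minus_zero_equiv_unimodular (R : Type) [CommRing R] (n : ℕ) :
    Nonempty
      ((Spec (CommRingCat.of R) ⟶ AffineNMinusZero n) ≃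
        {a : Fin n → R // Ideal.span (Set.range a) = ⊤}) :=
  ⟨theEquiv R n⟩
end
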